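/- For s in a fixed vertical strip with σ = Re s bounded and t = Im s → +∞, and for r in a fixed bounded set of ℂ, one has Γ(s+ir)Γ(s−ir) = −2πi · t^{2σ−1+2it} · exp(πiσ − 2it − πt) · (1 + O(t^{−1})), where the implied constant depends on σ and the bound on r. -/

import Mathlib

open Complex Real

open MeasureTheory Filter Set Topology

/-!
Euler–Maclaurin summation with the periodic weight `{x}(1 - {x})/2` writes `∑_{k ≤ n} log (z + k)`
as `∫₀ⁿ log (z + x) dx`, plus the endpoint terms, minus `∫₀ⁿ {x}(1 - {x})/2 / (z + x)² dx`. Fed into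
Euler's limit `Γ(z) = lim n^z n! / ∏_{k ≤ n} (z + k)` together with Stirling's formula for `n!`,
this gives `Γ(z) = exp ((z - 1/2) log z - z + log (2π)/2 + μ(z))` off the real axis, with
`|μ(z)| ≤ π / (8 |Im z|)`. For `z = it + u` with `u` bounded,
`log z = log t + iπ/2 + u/(it) + O(t⁻²)`, so the exponent is
`log (2π)/2 + (it + u - 1/2)(log t + iπ/2) - it + O(1/t)`. Adding the exponents for `u = σ + ir`
and `u = σ - ir` gives the main term, and `|e^δ - 1| ≤ 2|δ|` bounds the error.
-/

noncomputable def stirlingWeight (x : ℝ) : ℝ := Int.fract x * (1 - Int.fract x) / 2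

lemma stirlingWeight_nonneg (x : ℝ) : 0 ≤ stirlingWeight x := by
  have := Int.fract_nonneg x
  have := Int.fract_lt_one x
  unfold stirlingWeight; nlinarith

lemma stirlingWeight_le (x : ℝ) : stirlingWeight x ≤ 8⁻¹ := by
  unfold stirlingWeight; nlinarith [sq_nonneg (Int.fract x - 1 / 2)]

lemma continuous_stirlingWeight : Continuous stirlingWeight :=
  ContinuousOn.comp_fract'' (f := fun y : ℝ => y * (1 - y) / 2) (by fun_prop) (by norm_num)

lemma stirlingWeight_eq_of_mem_Icc {k : ℤ} {x : ℝ} (hx : x ∈ Icc (k : ℝ) (k + 1)) :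
    stirlingWeight x = (x - k) * (1 - (x - k)) / 2 := by
  rcases hx.2.lt_or_eq with hlt | rfl
  · have hfract : Int.fract x = x - k :=
      Int.fract_eq_iff.mpr ⟨by linarith [hx.1], by linarith, k, by ring⟩
    rw [stirlingWeight, hfract]
  · simp [stirlingWeight, Int.fract_add_one]

section EulerMaclaurin

variable {E : Type*} [NormedAddCommGroup E] [NormedSpace ℝ E] [CompleteSpace E] {f f' f'' : ℝ → E}

/-- On `[k, k + 1]`, `(y - k - 1/2) • f y + stirlingWeight y • f' y` is an antiderivative of
`f + stirlingWeight • f''`, since `stirlingWeight` vanishes at the endpoints and has derivative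
`1/2 - (y - k)` in between. -/
theorem integral_eq_trapezoid_sub_integral_stirlingWeight_smul
    (hf : ∀ x, HasDerivAt f (f' x) x) (hf' : ∀ x, HasDerivAt f' (f'' x) x)
    (hf'' : Continuous f'') (k : ℤ) :
    ∫ x in (k : ℝ)..k + 1, f x
      = (2 : ℝ)⁻¹ • (f k + f (k + 1)) - ∫ x in (k : ℝ)..k + 1, stirlingWeight x • f'' x := by
  set P : ℝ → ℝ := fun y => (y - k) * (1 - (y - k)) / 2
  have hP : ∀ x, HasDerivAt P (2⁻¹ - (x - k)) x := fun x => by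
    have h := (hasDerivAt_id' x).sub_const (k : ℝ)
    exact ((h.fun_mul ((hasDerivAt_const x (1 : ℝ)).fun_sub h)).div_const 2).congr_deriv (by ring)
  have hF : ∀ x ∈ uIcc (k : ℝ) (k + 1),
      HasDerivAt (fun y : ℝ => (y - k - 2⁻¹) • f y + P y • f' y) (f x + P x • f'' x) x := by
    intro x _
    refine (((((hasDerivAt_id' x).sub_const (k : ℝ)).sub_const 2⁻¹).fun_smul (hf x)).fun_add
      ((hP x).fun_smul (hf' x))).congr_deriv ?_
    module
  have hcont : Continuous fun x => P x • f'' x := by fun_prop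
  have hfc : Continuous f := continuous_iff_continuousAt.mpr fun x => (hf x).continuousAt
  have hweight : ∫ x in (k : ℝ)..k + 1, stirlingWeight x • f'' x
      = ∫ x in (k : ℝ)..k + 1, P x • f'' x :=
    intervalIntegral.integral_congr fun x hx => by
      rw [uIcc_of_le (by linarith)] at hx
      simp only [stirlingWeight_eq_of_mem_Icc hx, P]
  rw [hweight, eq_sub_iff_add_eq, ← intervalIntegral.integral_add (hfc.intervalIntegrable _ _)
    (hcont.intervalIntegrable _ _), intervalIntegral.integral_eq_sub_of_hasDerivAt hF
    ((hfc.add hcont).intervalIntegrable _ _)]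
  simp only [P]
  module

theorem sum_range_succ_eq_integral_add_integral_stirlingWeight_smul
    (hf : ∀ x, HasDerivAt f (f' x) x) (hf' : ∀ x, HasDerivAt f' (f'' x) x)
    (hf'' : Continuous f'') (n : ℕ) :
    ∑ k ∈ Finset.range (n + 1), f k
      = (∫ x in (0 : ℝ)..n, f x) + (2 : ℝ)⁻¹ • (f 0 + f n)
        + ∫ x in (0 : ℝ)..n, stirlingWeight x • f'' x := by
  have hfc : Continuous f := continuous_iff_continuousAt.mpr fun x => (hf x).continuousAt
  have hQ : Continuous fun x => stirlingWeight x • f'' x := by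
    have := continuous_stirlingWeight; fun_prop
  induction n with
  | zero =>
    simp only [zero_add, Finset.range_one, Finset.sum_singleton, CharP.cast_eq_zero,
      intervalIntegral.integral_same, add_zero]
    module
  | succ n ih =>
    have hstep := integral_eq_trapezoid_sub_integral_stirlingWeight_smul hf hf' hf'' n
    push_cast at hstep ⊢
    rw [Finset.sum_range_succ, ih, ← intervalIntegral.integral_add_adjacent_intervals
      (hfc.intervalIntegrable 0 n) (hfc.intervalIntegrable n (n + 1)),
      ← intervalIntegral.integral_add_adjacent_intervals (hQ.intervalIntegrable 0 n)
      (hQ.intervalIntegrable n (n + 1)), hstep]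
    push_cast
    module

end EulerMaclaurin

lemma integrable_inv_add_sq_add_sq (c : ℝ) {d : ℝ} (hd : d ≠ 0) :
    Integrable fun x : ℝ => ((x + c) ^ 2 + d ^ 2)⁻¹ := by
  refine (((integrable_inv_one_add_sq.comp_div hd).comp_add_right c).const_mul (d ^ 2)⁻¹).congr
    (Eventually.of_forall fun x => ?_)
  simp only
  field_simp
  ring

lemma integral_inv_add_sq_add_sq (c : ℝ) {d : ℝ} (hd : d ≠ 0) :
    ∫ x : ℝ, ((x + c) ^ 2 + d ^ 2)⁻¹ = π / |d| := by
  calc ∫ x : ℝ, ((x + c) ^ 2 + d ^ 2)⁻¹ = ∫ x : ℝ, (d ^ 2)⁻¹ * (1 + ((x + c) / d) ^ 2)⁻¹ := by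
        congr 1; funext x; field_simp; ring
    _ = (d ^ 2)⁻¹ * (|d| * π) := by
        rw [integral_const_mul, integral_add_right_eq_self (fun y => (1 + (y / d) ^ 2)⁻¹),
          Measure.integral_comp_div (fun y => (1 + y ^ 2)⁻¹), integral_univ_inv_one_add_sq,
          smul_eq_mul]
    _ = π / |d| := by
        rw [← sq_abs d]; field_simp

lemma norm_stirlingWeight_div_sq_le (z : ℂ) (x : ℝ) :
    ‖(stirlingWeight x : ℂ) / (z + x) ^ 2‖ ≤ 8⁻¹ * ((x + z.re) ^ 2 + z.im ^ 2)⁻¹ := by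
  have hnorm : ‖z + x‖ ^ 2 = (x + z.re) ^ 2 + z.im ^ 2 := by
    rw [Complex.sq_norm, Complex.normSq_apply, add_re, add_im, ofReal_re, ofReal_im, add_zero]
    ring
  rw [norm_div, norm_pow, hnorm, Complex.norm_real, Real.norm_of_nonneg (stirlingWeight_nonneg x),
    ← div_eq_mul_inv]
  exact div_le_div_of_nonneg_right (stirlingWeight_le x) (by positivity)

lemma add_ofReal_ne_zero {z : ℂ} (hz : z.im ≠ 0) (x : ℝ) : z + x ≠ 0 := fun h => by
  simpa [hz] using congrArg Complex.im h

lemma integrable_stirlingWeight_div_sq {z : ℂ} (hz : z.im ≠ 0) :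
    Integrable fun x : ℝ => (stirlingWeight x : ℂ) / (z + x) ^ 2 := by
  refine ((integrable_inv_add_sq_add_sq z.re hz).const_mul 8⁻¹).mono' ?_
    (Eventually.of_forall (norm_stirlingWeight_div_sq_le z))
  have := continuous_stirlingWeight
  exact (Continuous.div (by fun_prop) (by fun_prop) fun x =>
    pow_ne_zero 2 (add_ofReal_ne_zero hz x)).aestronglyMeasurable

noncomputable def stirlingRemainder (z : ℂ) : ℂ :=
  ∫ x in Ioi (0 : ℝ), (stirlingWeight x : ℂ) / (z + x) ^ 2

lemma norm_stirlingRemainder_le {z : ℂ} (hz : z.im ≠ 0) :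
    ‖stirlingRemainder z‖ ≤ π / (8 * |z.im|) := by
  have hbound := (integrable_inv_add_sq_add_sq z.re hz).const_mul 8⁻¹
  calc ‖stirlingRemainder z‖ ≤ ∫ x in Ioi (0 : ℝ), 8⁻¹ * ((x + z.re) ^ 2 + z.im ^ 2)⁻¹ :=
        norm_integral_le_of_norm_le hbound.integrableOn
          (Eventually.of_forall (norm_stirlingWeight_div_sq_le z))
    _ ≤ ∫ x : ℝ, 8⁻¹ * ((x + z.re) ^ 2 + z.im ^ 2)⁻¹ :=
        setIntegral_le_integral hbound (Eventually.of_forall fun x => by positivity)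
    _ = π / (8 * |z.im|) := by
        rw [integral_const_mul, integral_inv_add_sq_add_sq z.re hz]; ring

section Stirling

variable {z : ℂ}

lemma hasDerivAt_log_add_ofReal (hz : z.im ≠ 0) (x : ℝ) :
    HasDerivAt (fun y : ℝ => Complex.log (z + y)) (z + x)⁻¹ x := by
  simpa using (((hasDerivAt_id' x).ofReal_comp).const_add z).clog_real
    (mem_slitPlane_iff.mpr (Or.inr (by simpa using hz)))

lemma hasDerivAt_inv_add_ofReal (hz : z.im ≠ 0) (x : ℝ) :
    HasDerivAt (fun y : ℝ => (z + y)⁻¹) (-((z + x) ^ 2)⁻¹) x := by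
  simpa [neg_div] using (((hasDerivAt_id' x).ofReal_comp).const_add z).fun_inv
    (add_ofReal_ne_zero hz x)

lemma integral_log_add_ofReal (hz : z.im ≠ 0) (n : ℕ) :
    ∫ x in (0 : ℝ)..n, Complex.log (z + x)
      = (z + n) * Complex.log (z + n) - n - z * Complex.log z := by
  have hderiv : ∀ x ∈ uIcc (0 : ℝ) n,
      HasDerivAt (fun y : ℝ => (z + y) * Complex.log (z + y) - (z + y))
        (Complex.log (z + x)) x := by
    intro x _
    have hadd := ((hasDerivAt_id' x).ofReal_comp).const_add z
    refine ((hadd.fun_mul (hasDerivAt_log_add_ofReal hz x)).fun_sub hadd).congr_deriv ?_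
    rw [mul_inv_cancel₀ (add_ofReal_ne_zero hz x)]; simp
  have hcont : Continuous fun x : ℝ => Complex.log (z + x) :=
    continuous_iff_continuousAt.mpr fun x => (hasDerivAt_log_add_ofReal hz x).continuousAt
  rw [intervalIntegral.integral_eq_sub_of_hasDerivAt hderiv (hcont.intervalIntegrable _ _)]
  simp only [ofReal_natCast, ofReal_zero, add_zero]
  ring

lemma sum_range_succ_log_add (hz : z.im ≠ 0) (n : ℕ) :
    ∑ k ∈ Finset.range (n + 1), Complex.log (z + k)
      = (z + n) * Complex.log (z + n) - n - z * Complex.log z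
        + (Complex.log z + Complex.log (z + n)) / 2
        - ∫ x in (0 : ℝ)..n, (stirlingWeight x : ℂ) / (z + x) ^ 2 := by
  have hcont : Continuous fun x : ℝ => -((z + x) ^ 2)⁻¹ :=
    ((by fun_prop : Continuous fun x : ℝ => (z + x) ^ 2).inv₀
      fun x => pow_ne_zero 2 (add_ofReal_ne_zero hz x)).neg
  have h := sum_range_succ_eq_integral_add_integral_stirlingWeight_smul
    (hasDerivAt_log_add_ofReal hz) (hasDerivAt_inv_add_ofReal hz) hcont n
  simp only [real_smul, mul_neg, ← div_eq_mul_inv, intervalIntegral.integral_neg] at h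
  push_cast at h
  rw [h, integral_log_add_ofReal hz n, add_zero]
  ring

/-- A logarithm of `GammaSeq z n`, with the branch of `log` taken factor by factor. -/
noncomputable def logGammaSeq (z : ℂ) (n : ℕ) : ℂ :=
  z * Real.log n + Real.log n.factorial - ∑ k ∈ Finset.range (n + 1), Complex.log (z + k)

lemma exp_logGammaSeq (hz : ∀ k : ℕ, z + k ≠ 0) {n : ℕ} (hn : n ≠ 0) :
    exp (logGammaSeq z n) = GammaSeq z n := by
  rw [logGammaSeq, Complex.exp_sub, Complex.exp_add, Complex.exp_sum, Complex.GammaSeq, natCast_log,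
    cpow_def_of_ne_zero (Nat.cast_ne_zero.mpr hn), ← ofReal_exp, Real.exp_log (by positivity),
    mul_comm z]
  simp [Finset.prod_congr rfl fun k _ => exp_log (hz k)]

lemma tendsto_log_factorial_sub_stirling :
    Tendsto (fun n : ℕ =>
        Real.log n.factorial - ((n + 1 / 2) * Real.log n - n + Real.log (2 * π) / 2))
      atTop (𝓝 0) := by
  have h := ((Real.continuousAt_log (by positivity)).tendsto.comp
    Stirling.tendsto_stirlingSeq_sqrt_pi).sub_const (Real.log π / 2)
  rw [Real.log_sqrt pi_pos.le, sub_self] at h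
  refine h.congr' ?_
  filter_upwards [eventually_ne_atTop 0] with n hn
  have hn0 : (0 : ℝ) < n := by positivity
  simp only [Function.comp, Stirling.log_stirlingSeq_formula, Real.log_mul two_ne_zero hn0.ne',
    Real.log_div hn0.ne' (exp_ne_zero 1), Real.log_exp, Real.log_mul two_ne_zero pi_pos.ne']
  ring

lemma tendsto_add_half_mul_log_one_add_div (z : ℂ) :
    Tendsto (fun n : ℕ => (z + n + 1 / 2) * Complex.log (1 + z / n)) atTop (𝓝 z) := by
  have hlog : Tendsto (fun n : ℕ => Complex.log (1 + z / n)) atTop (𝓝 0) := by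
    have h := (tendsto_const_div_atTop_nhds_zero_nat z).const_add 1
    rw [add_zero] at h
    simpa [Function.comp_def] using (continuousAt_clog one_mem_slitPlane).tendsto.comp h
  have hmul : Tendsto (fun n : ℕ => n * Complex.log (1 + z / n)) atTop (𝓝 z) :=
    Complex.tendsto_nat_mul_log_one_add_of_tendsto <| tendsto_const_nhds.congr' <| by
      filter_upwards [eventually_ne_atTop 0] with n hn
      rw [mul_div_cancel₀ z (Nat.cast_ne_zero.mpr hn)]
  have h := (hlog.const_mul (z + 1 / 2)).add hmul
  rw [mul_zero, zero_add] at h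
  exact h.congr fun n => by ring

lemma tendsto_logGammaSeq (hz : z.im ≠ 0) :
    Tendsto (logGammaSeq z) atTop
      (𝓝 ((z - 1 / 2) * Complex.log z - z + Real.log (2 * π) / 2 + stirlingRemainder z)) := by
  have hε := (continuous_ofReal.tendsto 0).comp tendsto_log_factorial_sub_stirling
  have hJ : Tendsto (fun n : ℕ => ∫ x in (0 : ℝ)..n, (stirlingWeight x : ℂ) / (z + x) ^ 2) atTop
      (𝓝 (stirlingRemainder z)) :=
    intervalIntegral_tendsto_integral_Ioi 0 (integrable_stirlingWeight_div_sq hz).integrableOn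
      tendsto_natCast_atTop_atTop
  have hlim := ((hε.sub (tendsto_add_half_mul_log_one_add_div z)).add hJ).const_add
    ((z - 1 / 2) * Complex.log z + Real.log (2 * π) / 2)
  rw [show (z - 1 / 2) * Complex.log z - z + Real.log (2 * π) / 2 + stirlingRemainder z
      = (z - 1 / 2) * Complex.log z + Real.log (2 * π) / 2
        + (((0 : ℝ) : ℂ) - z + stirlingRemainder z)
    by push_cast; ring]
  refine hlim.congr' ?_
  filter_upwards [eventually_ne_atTop 0] with n hn
  have hn0 : (0 : ℝ) < n := by positivity
  have hsplit : Complex.log (z + n) = Real.log n + Complex.log (1 + z / n) := by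
    rw [← log_ofReal_mul hn0, ofReal_natCast, mul_add, mul_one, mul_div_cancel₀ z
      (Nat.cast_ne_zero.mpr hn), add_comm]
    exact fun h => hz (by simpa [hn] using congrArg Complex.im h)
  simp only [Function.comp, logGammaSeq, sum_range_succ_log_add hz n, hsplit]
  push_cast
  ring

theorem Complex.Gamma_eq_exp_stirling (hz : z.im ≠ 0) :
    Gamma z
      = exp ((z - 1 / 2) * Complex.log z - z + Real.log (2 * π) / 2 + stirlingRemainder z) := by
  have hzk (k : ℕ) : z + k ≠ 0 := by exact_mod_cast add_ofReal_ne_zero hz k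
  refine tendsto_nhds_unique (GammaSeq_tendsto_Gamma z) (((continuous_exp.tendsto _).comp
    (tendsto_logGammaSeq hz)).congr' ?_)
  filter_upwards [eventually_ne_atTop 0] with n hn
  exact exp_logGammaSeq hzk hn

end Stirling

lemma log_I_mul_ofReal_add {t : ℝ} (ht : 0 < t) {u : ℂ} (hu : -t < u.im) :
    Complex.log (I * t + u) = Real.log t + π / 2 * I + Complex.log (1 + u / (I * t)) := by
  have hre : 0 < (1 + u / (I * t)).re := by
    have hre_eq : (1 + u / (I * t)).re = 1 + u.im / t := by
      rw [div_mul_eq_div_div_swap, div_ofReal, div_I]; simp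
    have : -1 < u.im / t := by rw [lt_div_iff₀ ht]; linarith
    linarith
  have hne : 1 + u / (I * t) ≠ 0 := fun h => by simp [h] at hre
  have harg := abs_lt.mp (abs_arg_lt_pi_div_two_iff.mpr (Or.inl hre))
  have hsplit : I * t + u = t * (I * (1 + u / (I * t))) := by
    field_simp [ofReal_ne_zero.mpr ht.ne']
  rw [hsplit, log_ofReal_mul ht (mul_ne_zero I_ne_zero hne), log_mul I_ne_zero hne
    (by rw [arg_I]; constructor <;> linarith [pi_pos]), log_I, add_assoc]

lemma norm_log_one_add_sub_self_le_sq {w : ℂ} (hw : ‖w‖ ≤ 1 / 2) :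
    ‖Complex.log (1 + w) - w‖ ≤ ‖w‖ ^ 2 := by
  refine (norm_log_one_add_sub_self_le (by linarith)).trans ?_
  have h2 : (1 - ‖w‖)⁻¹ ≤ 2 := by
    rw [inv_le_comm₀ (by linarith) two_pos]; linarith
  have := sq_nonneg ‖w‖
  nlinarith

lemma norm_mul_log_one_add_div_I_mul_sub_le {t M : ℝ} {u : ℂ} (hu : ‖u‖ ≤ M) (ht : 2 * M + 1 ≤ t) :
    ‖(I * t + u - 1 / 2) * Complex.log (1 + u / (I * t)) - u‖ ≤ 3 * (M + 1) ^ 2 / t := by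
  have hM : 0 ≤ M := (norm_nonneg u).trans hu
  have ht0 : 0 < t := by linarith
  have hIt : ‖I * (t : ℂ)‖ = t := by simp [abs_of_pos ht0]
  have hw : ‖u / (I * t)‖ ≤ M / t := by
    rw [norm_div, hIt]; gcongr
  have hwhalf : M / t ≤ 1 / 2 := by rw [div_le_iff₀ ht0]; linarith
  have hlog := norm_log_one_add_sub_self_le_sq (hw.trans hwhalf)
  have hfactor : ‖I * (t : ℂ) + u - 1 / 2‖ ≤ 2 * t := by
    calc ‖I * (t : ℂ) + u - 1 / 2‖ ≤ ‖I * (t : ℂ)‖ + ‖u‖ + ‖(1 / 2 : ℂ)‖ :=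
          (norm_sub_le _ _).trans (by gcongr; exact norm_add_le _ _)
      _ ≤ 2 * t := by rw [hIt, one_div, norm_inv, Complex.norm_ofNat]; linarith
  have hu' : ‖u - 1 / 2‖ ≤ M + 1 :=
    (norm_sub_le _ _).trans (by rw [one_div, norm_inv, Complex.norm_ofNat]; linarith)
  have hdecomp : (I * t + u - 1 / 2) * Complex.log (1 + u / (I * t)) - u
      = (I * t + u - 1 / 2) * (Complex.log (1 + u / (I * t)) - u / (I * t))
        + (u - 1 / 2) * (u / (I * t)) := by
    linear_combination mul_div_cancel₀ u (mul_ne_zero I_ne_zero (ofReal_ne_zero.mpr ht0.ne'))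
  rw [hdecomp]
  calc _ ≤ 2 * t * (M / t) ^ 2 + (M + 1) * (M / t) := by
        refine (norm_add_le _ _).trans ?_
        rw [norm_mul, norm_mul]
        gcongr
        exact hlog.trans (by gcongr)
    _ = (3 * M ^ 2 + M) / t := by field_simp; ring
    _ ≤ 3 * (M + 1) ^ 2 / t := by gcongr; nlinarith

theorem Complex.Gamma_I_mul_add_eq_exp {t M : ℝ} {u : ℂ} (hu : ‖u‖ ≤ M) (ht : 2 * M + 1 ≤ t) :
    ∃ δ : ℂ, Gamma (I * t + u)
        = exp (Real.log (2 * π) / 2 + (I * t + u - 1 / 2) * (Real.log t + π / 2 * I) - I * t + δ)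
      ∧ ‖δ‖ ≤ 4 * (M + 1) ^ 2 / t := by
  have hM : 0 ≤ M := (norm_nonneg u).trans hu
  have ht0 : 0 < t := by linarith
  have him : (I * t + u).im = t + u.im := by simp
  have hu_im : |u.im| ≤ M := (abs_im_le_norm u).trans hu
  have him_pos : t / 2 ≤ (I * t + u).im := by rw [him]; linarith [neg_abs_le u.im]
  refine ⟨(I * t + u - 1 / 2) * Complex.log (1 + u / (I * t)) - u + stirlingRemainder (I * t + u),
    ?_, ?_⟩
  · rw [Complex.Gamma_eq_exp_stirling (by linarith), log_I_mul_ofReal_add ht0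
      (by linarith [neg_abs_le u.im])]
    ring_nf
  · have hrem : ‖stirlingRemainder (I * t + u)‖ ≤ 1 / t := by
      refine (norm_stirlingRemainder_le (by linarith)).trans ?_
      rw [abs_of_pos (by linarith), div_le_div_iff₀ (by linarith) ht0]
      nlinarith [pi_le_four]
    calc _ ≤ 3 * (M + 1) ^ 2 / t + 1 / t :=
          (norm_add_le _ _).trans (add_le_add (norm_mul_log_one_add_div_I_mul_sub_le hu ht) hrem)
      _ ≤ 4 * (M + 1) ^ 2 / t := by
          rw [← add_div]; gcongr; nlinarith

lemma exp_mul_exp_stirling_main_term (σ v : ℂ) {t : ℝ} (ht : 0 < t) :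
    exp (Real.log (2 * π) / 2 + (I * t + (σ + v) - 1 / 2) * (Real.log t + π / 2 * I) - I * t)
      * exp (Real.log (2 * π) / 2 + (I * t + (σ - v) - 1 / 2) * (Real.log t + π / 2 * I) - I * t)
      = (-2 * π * I) * (t : ℂ) ^ ((2 * σ - 1) + 2 * I * t)
        * exp (π * I * σ - 2 * I * t - π * t) := by
  have h2πI : (-2 * π * I : ℂ) = exp (Real.log (2 * π) - π / 2 * I) := by
    rw [Complex.exp_sub, ← ofReal_exp, Real.exp_log (by positivity), exp_pi_div_two_mul_I]
    field_simp
    simp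
  rw [h2πI, cpow_def_of_ne_zero (ofReal_ne_zero.mpr ht.ne'), ← ofReal_log ht.le, ← Complex.exp_add,
    ← Complex.exp_add, ← Complex.exp_add]
  congr 1
  linear_combination (π * t : ℂ) * I_sq

theorem stmt7_general (a b R : ℝ) :
    ∃ C > (0:ℝ), ∃ T₀ > (1:ℝ), ∀ s r : ℂ,
      a ≤ s.re → s.re ≤ b → ‖r‖ ≤ R → T₀ ≤ s.im →
      ∃ E : ℂ,
        Complex.Gamma (s + I * r) * Complex.Gamma (s - I * r)
          = (-2 * π * I) * (s.im : ℂ) ^ ((2 * s.re - 1 : ℂ) + 2 * I * s.im) *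
              Complex.exp (π * I * s.re - 2 * I * s.im - π * s.im) * (1 + E) ∧
        ‖E‖ ≤ C / s.im := by
  set M := |a| + |b| + |R|
  have hM : 0 ≤ M := by positivity
  refine ⟨16 * (M + 1) ^ 2, by positivity, 8 * (M + 1) ^ 2, by nlinarith, fun s r ha hb hr ht => ?_⟩
  have ht0 : 0 < s.im := by nlinarith
  have hσ : |s.re| + ‖r‖ ≤ M := by
    have hre : |s.re| ≤ |a| + |b| := abs_le.mpr
      ⟨by linarith [neg_abs_le a, abs_nonneg b], by linarith [le_abs_self b, abs_nonneg a]⟩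
    linarith [le_abs_self R]
  have hnorm (v : ℂ) (hv : ‖v‖ = ‖r‖) : ‖(s.re : ℂ) + v‖ ≤ M :=
    (norm_add_le _ _).trans (by rw [norm_real, Real.norm_eq_abs, hv]; exact hσ)
  have hT : 2 * M + 1 ≤ s.im := by nlinarith
  obtain ⟨δ₁, hΓ₁, hδ₁⟩ := Complex.Gamma_I_mul_add_eq_exp (hnorm (I * r) (by simp)) hT
  obtain ⟨δ₂, hΓ₂, hδ₂⟩ := Complex.Gamma_I_mul_add_eq_exp (hnorm (-(I * r)) (by simp)) hT
  have hs (v : ℂ) : s + v = I * s.im + (s.re + v) := Complex.ext (by simp) (by simp)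
  have hδ : ‖δ₁ + δ₂‖ ≤ 8 * (M + 1) ^ 2 / s.im :=
    (norm_add_le _ _).trans ((add_le_add hδ₁ hδ₂).trans_eq (by ring))
  refine ⟨Complex.exp (δ₁ + δ₂) - 1, ?_, ?_⟩
  · rw [hs, sub_eq_add_neg s, hs, hΓ₁, hΓ₂, add_sub_cancel, ← sub_eq_add_neg,
      ← exp_mul_exp_stirling_main_term _ _ ht0]
    simp only [Complex.exp_add, sub_eq_add_neg]
    ring
  · refine (norm_exp_sub_one_le (hδ.trans ?_)).trans ?_
    · rw [div_le_one ht0]; exact ht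
    · exact (mul_le_mul_of_nonneg_left hδ two_pos.le).trans_eq (by ring)

/-- Leading term of the Stirling asymptotic (3.12): for `s` in a fixed vertical strip with
`t = Im s → +∞` and `r` bounded,
`Γ(s+ir)Γ(s−ir) = −2πi t^{2σ−1+2it} e^{πiσ−2it−πt} (1 + O(1/t))`. -/
theorem stmt7 (a b R : ℝ) (hab : a ≤ b) (hR : 0 < R) :
    ∃ C > (0:ℝ), ∃ T₀ > (1:ℝ), ∀ s r : ℂ,
      a ≤ s.re → s.re ≤ b → ‖r‖ ≤ R → T₀ ≤ s.im →
      ∃ E : ℂ,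
        Complex.Gamma (s + I * r) * Complex.Gamma (s - I * r)
          = (-2 * π * I) * (s.im : ℂ) ^ ((2 * s.re - 1 : ℂ) + 2 * I * s.im) *
              Complex.exp (π * I * s.re - 2 * I * s.im - π * s.im) * (1 + E) ∧
        ‖E‖ ≤ C / s.im :=
  stmt7_general a b R
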